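/- Let G be a one-dimensional simplicial complex that is the Barycentric refinement of a graph (so the underlying graph is bipartite with parts given by the dimension of simplices). Then, in a suitable basis given by a diagonal ±1 matrix U, the Hodge Laplacian H = (d+d^*)^2 satisfies U H U^T = L - L^{-1}, where L is the connection matrix of G. In particular, H and L - L^{-1} are similar matrices. -/

import Mathlib

/-!
Let `B` be the unsigned incidence matrix of `Γ` (edges × vertices). Distinct vertices never
meet and two distinct edges of the simple graph `Γ` share at most one vertex, so the connection
matrix is the block matrix `L = [[1, Bᵀ], [B, B Bᵀ - 1]]`. Its inverse is
`[[1 - Bᵀ B, Bᵀ], [B, -1]]`, hence `L - L⁻¹ = diag(Bᵀ B, B Bᵀ)`.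
On the other side `Γ` is bipartite, coloured by the parity of the cardinality of a simplex, and
conjugating the signed incidence matrix `d0` by these signs turns it into `-B`. The same
conjugation therefore carries `H = diag(d0ᵀ d0, d0 d0ᵀ)` to `diag(Bᵀ B, B Bᵀ)`.
-/

open Matrix Finset

section Incidence

variable {R W E ι : Type*} [Fintype W] [DecidableEq W]

variable (R) in
def unsignedIncidence [Zero R] [One R] (ends : E → Finset W) : Matrix E W R :=
  of fun e v => if v ∈ ends e then 1 else 0

variable (R) in
def signedIncidence [Zero R] [One R] [Neg R] (t h : E → W) : Matrix E W R :=
  of fun e v => if v = h e then 1 else if v = t e then -1 else 0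

variable (R) in
def connectionMatrix [Zero R] [One R] (ends : ι → Finset W) : Matrix ι ι R :=
  of fun z w => if (ends z ∩ ends w).Nonempty then 1 else 0

def hodgeLaplacian [Fintype E] [Mul R] [AddCommMonoid R] (d : Matrix E W R) :
    Matrix (W ⊕ E) (W ⊕ E) R :=
  fromBlocks (dᵀ * d) 0 0 (d * dᵀ)

lemma unsignedIncidence_mul_transpose_apply [NonAssocSemiring R] (ends : E → Finset W)
    (e f : E) :
    (unsignedIncidence R ends * (unsignedIncidence R ends)ᵀ) e f =
      #(ends e ∩ ends f) := by
  rw [Matrix.mul_apply]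
  simp only [unsignedIncidence, transpose_apply, of_apply, ite_mul, one_mul,
    zero_mul, ← ite_and, ← mem_inter, sum_boole, filter_univ_mem]

omit [Fintype W] [DecidableEq W] in
lemma natCast_card_eq_ite_nonempty [AddMonoidWithOne R] {s : Finset W} (hs : #s ≤ 1) :
    (#s : R) = if s.Nonempty then 1 else 0 := by
  split_ifs with hne
  · rw [le_antisymm hs (card_pos.mpr hne), Nat.cast_one]
  · rw [not_nonempty_iff_eq_empty.mp hne, card_empty, Nat.cast_zero]

lemma connectionMatrix_sum_elim_singleton [Fintype E] [DecidableEq E] [Ring R]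
    (ends : E → Finset W) (hcard : ∀ e, #(ends e) = 2)
    (hinter : ∀ e f, e ≠ f → #(ends e ∩ ends f) ≤ 1) :
    connectionMatrix R (Sum.elim (fun v => {v}) ends) =
      fromBlocks 1 (unsignedIncidence R ends)ᵀ (unsignedIncidence R ends)
        (unsignedIncidence R ends * (unsignedIncidence R ends)ᵀ - 1) := by
  ext (v | e) (w | f)
  · simp [connectionMatrix, one_apply, Finset.Nonempty, eq_comm]
  · simp [connectionMatrix, unsignedIncidence, Finset.Nonempty]
  · simp [connectionMatrix, unsignedIncidence, Finset.Nonempty]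
  · simp only [connectionMatrix, of_apply, Sum.elim_inr, fromBlocks_apply₂₂, Matrix.sub_apply,
      unsignedIncidence_mul_transpose_apply]
    obtain rfl | hef := eq_or_ne e f
    · simp [hcard, ← card_pos]; norm_num
    · rw [one_apply_ne hef, sub_zero]
      exact (natCast_card_eq_ite_nonempty (hinter e f hef)).symm

lemma fromBlocks_mul_fromBlocks_eq_one [Fintype E] [DecidableEq E] [Ring R]
    (B : Matrix E W R) :
    fromBlocks 1 Bᵀ B (B * Bᵀ - 1) * fromBlocks (1 - Bᵀ * B) Bᵀ B (-1) = 1 := by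
  rw [fromBlocks_multiply, ← fromBlocks_one]
  congr 1 <;> simp [Matrix.mul_sub, Matrix.sub_mul, Matrix.mul_assoc]

lemma sub_inv_fromBlocks_eq_hodgeLaplacian [Fintype E] [DecidableEq E] [CommRing R]
    (B : Matrix E W R) :
    let M := fromBlocks 1 Bᵀ B (B * Bᵀ - 1)
    IsUnit M.det ∧ M - M⁻¹ = hodgeLaplacian B := by
  have hM := fromBlocks_mul_fromBlocks_eq_one B
  refine ⟨isUnit_det_of_right_inverse hM, ?_⟩
  rw [inv_eq_right_inv hM, hodgeLaplacian, sub_eq_add_neg, fromBlocks_neg, fromBlocks_add]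
  congr 1 <;> abel

lemma signedIncidence_eq_neg_diagonal_mul [Fintype E] [DecidableEq E] [Ring R]
    {t h : E → W} (hne : ∀ e, t e ≠ h e) {σ : W → R} (hσ : ∀ e, σ (h e) = -σ (t e))
    (hσ2 : ∀ v, σ v * σ v = 1) :
    signedIncidence R t h =
      -(diagonal (σ ∘ t) * unsignedIncidence R (fun e => {t e, h e}) * diagonal σ) := by
  ext e v
  simp only [signedIncidence, unsignedIncidence, of_apply, mul_diagonal, diagonal_mul,
    Function.comp_apply, Matrix.neg_apply, mem_insert, mem_singleton]
  by_cases hh : v = h e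
  · subst hh
    simp [hne e |>.symm, hσ, hσ2]
  · by_cases ht : v = t e
    · subst ht
      simp [hh, hσ2]
    · simp [hh, ht]

omit [DecidableEq W] in
lemma hodgeLaplacian_neg [Fintype E] [Ring R] (d : Matrix E W R) :
    hodgeLaplacian (-d) = hodgeLaplacian d := by
  simp [hodgeLaplacian]

lemma diagonal_mul_hodgeLaplacian_mul_diagonal [Fintype E] [DecidableEq E] [CommRing R]
    {p : W → R} {q : E → R} (hp : ∀ v, p v * p v = 1) (hq : ∀ e, q e * q e = 1)
    (B : Matrix E W R) :
    diagonal (Sum.elim p q) * hodgeLaplacian (diagonal q * B * diagonal p) *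
      (diagonal (Sum.elim p q))ᵀ = hodgeLaplacian B := by
  have hP : diagonal p * diagonal p = 1 := by simp [diagonal_mul_diagonal, hp]
  have hQ : diagonal q * diagonal q = 1 := by simp [diagonal_mul_diagonal, hq]
  rw [diagonal_transpose, ← fromBlocks_diagonal, hodgeLaplacian, hodgeLaplacian,
    fromBlocks_multiply, fromBlocks_multiply]
  simp only [Matrix.mul_zero, Matrix.zero_mul, add_zero, zero_add, transpose_mul,
    diagonal_transpose, Matrix.mul_assoc]
  congr 1
  · simp only [← Matrix.mul_assoc (diagonal q), hQ, Matrix.one_mul]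
    simp only [← Matrix.mul_assoc, hP, Matrix.one_mul, Matrix.mul_one]
  · simp only [← Matrix.mul_assoc (diagonal p), hP, Matrix.one_mul]
    simp only [← Matrix.mul_assoc, hQ, Matrix.one_mul, Matrix.mul_one]

end Incidence

lemma neg_one_pow_card_eq_neg {V R : Type*} [Ring R] {x y : Finset V}
    (hx : #x = 1 ∨ #x = 2) (hy : #y = 1 ∨ #y = 2) (hxy : x ⊂ y ∨ y ⊂ x) :
    (-1 : R) ^ #y = -(-1) ^ #x := by
  have hcard : #y = #x + 1 ∨ #x = #y + 1 := by
    rcases hxy with hxy | hxy <;> have := card_lt_card hxy <;> omega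
  rcases hcard with hcard | hcard <;> rw [hcard, pow_succ, mul_neg_one]
  rw [neg_neg]

lemma card_inter_pair_le_one {W E : Type*} [DecidableEq W] {t h : E → W}
    (hinj : Function.Injective fun e => s(t e, h e)) (hne : ∀ e, t e ≠ h e) {e f : E}
    (hef : e ≠ f) : #({t e, h e} ∩ {t f, h f}) ≤ 1 := by
  by_contra! hlt
  have hpair : ∀ g, #({t g, h g} : Finset W) ≤ #({t e, h e} ∩ {t f, h f}) := fun g => by
    rw [card_pair (hne g)]; exact hlt
  have hends : ({t e, h e} : Finset W) = {t f, h f} :=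
    (eq_of_subset_of_card_le inter_subset_left (hpair e)).symm.trans
      (eq_of_subset_of_card_le inter_subset_right (hpair f))
  refine hef (hinj (Sym2.ext fun v => ?_))
  simpa using Finset.ext_iff.mp hends v

theorem hydrogen_hodge_general {V : Type*} [DecidableEq V]
    (K : Finset (Finset V))
    (hK1 : ∀ x ∈ K, x.card = 1 ∨ x.card = 2)
    (Γ : SimpleGraph {x // x ∈ K})
    (hΓ : ∀ x y, Γ.Adj x y ↔ ((x : Finset V) ⊂ (y : Finset V) ∨ (y : Finset V) ⊂ (x : Finset V)))
    (E : Type*) [Fintype E] [DecidableEq E]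
    (t h : E → {x // x ∈ K})
    (hth : ∀ e, Γ.Adj (t e) (h e))
    (hbij : ∀ u v, Γ.Adj u v → ∃! e, s(t e, h e) = s(u, v))
    (d0 : Matrix E {x // x ∈ K} ℝ)
    (hd0 : ∀ e v, d0 e v = if v = h e then 1 else if v = t e then -1 else 0)
    (ends : ({x // x ∈ K} ⊕ E) → Finset {x // x ∈ K})
    (hends : ∀ z, ends z = Sum.elim (fun x => ({x} : Finset {x // x ∈ K}))
      (fun e => {t e, h e}) z)
    (L : Matrix ({x // x ∈ K} ⊕ E) ({x // x ∈ K} ⊕ E) ℝ)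
    (hL : ∀ z w, L z w = if (ends z ∩ ends w).Nonempty then 1 else 0) :
    IsUnit L.det ∧
    ∃ U : Matrix ({x // x ∈ K} ⊕ E) ({x // x ∈ K} ⊕ E) ℝ,
      U.IsDiag ∧ (∀ i, U i i = 1 ∨ U i i = -1) ∧
      U * (Matrix.fromBlocks (d0.transpose * d0) 0 0 (d0 * d0.transpose)) * U.transpose =
        L - L⁻¹ := by
  set B := unsignedIncidence ℝ fun e => ({t e, h e} : Finset {x // x ∈ K})
  set σ : {x // x ∈ K} → ℝ := fun x => (-1) ^ (x : Finset V).card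
  have hσ2 : ∀ x, σ x * σ x = 1 := fun x => by simp [σ, ← mul_pow]
  have hσ : ∀ e, σ (h e) = -σ (t e) := fun e =>
    neg_one_pow_card_eq_neg (hK1 _ (t e).2) (hK1 _ (h e).2) ((hΓ _ _).mp (hth e))
  have hne : ∀ e, t e ≠ h e := fun e => (hth e).ne
  have hinj : Function.Injective fun e => s(t e, h e) := fun e f hef => by
    obtain ⟨g, -, hg⟩ := hbij _ _ (hth e)
    exact (hg e rfl).trans (hg f hef.symm).symm
  have hd : d0 = -(diagonal (σ ∘ t) * B * diagonal σ) := by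
    rw [← signedIncidence_eq_neg_diagonal_mul hne hσ hσ2]
    ext e v
    exact hd0 e v
  have hLB : L = fromBlocks 1 Bᵀ B (B * Bᵀ - 1) := by
    rw [← connectionMatrix_sum_elim_singleton _ (fun e => card_pair (hne e))
      (fun e f => card_inter_pair_le_one hinj hne)]
    ext z w
    rw [hL, hends, hends]
    rfl
  obtain ⟨hunit, hsub⟩ := sub_inv_fromBlocks_eq_hodgeLaplacian B
  refine ⟨hLB ▸ hunit, diagonal (Sum.elim σ (σ ∘ t)), isDiag_diagonal _, ?_, ?_⟩
  · rintro (x | e) <;> rw [diagonal_apply_eq] <;> exact neg_one_pow_eq_or ℝ _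
  · change _ * hodgeLaplacian d0 * _ = _
    rw [hLB, hsub, hd, hodgeLaplacian_neg,
      diagonal_mul_hodgeLaplacian_mul_diagonal (q := σ ∘ t) hσ2 (fun e => hσ2 (t e))]

/-- Hydrogen and Hodge: let `Γ` be the Barycentric refinement graph of a
one-dimensional simplicial complex `K` (vertices of `Γ` are the simplices of
`K`, adjacent iff one strictly contains the other), let `H = H0 ⊕ H1` be the
Hodge Laplacian of `Γ` built from an incidence matrix `d0`, and let `L` be the
connection matrix of the one-dimensional complex of `Γ` (indexed by vertices
and edges of `Γ`). Then `L` is invertible and, in a suitable basis given by a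
diagonal `±1` matrix `U`, one has `U H Uᵀ = L - L⁻¹`; in particular `H` and
`L - L⁻¹` are similar. -/
theorem hydrogen_hodge {V : Type*} [Fintype V] [DecidableEq V]
    (K : Finset (Finset V))
    (hK1 : ∀ x ∈ K, x.card = 1 ∨ x.card = 2)
    (hKc : ∀ x ∈ K, ∀ y ⊆ x, y.Nonempty → y ∈ K)
    (Γ : SimpleGraph {x // x ∈ K}) [DecidableRel Γ.Adj]
    (hΓ : ∀ x y, Γ.Adj x y ↔ ((x : Finset V) ⊂ (y : Finset V) ∨ (y : Finset V) ⊂ (x : Finset V)))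
    (E : Type*) [Fintype E] [DecidableEq E]
    (t h : E → {x // x ∈ K})
    (hth : ∀ e, Γ.Adj (t e) (h e))
    (hbij : ∀ u v, Γ.Adj u v → ∃! e, s(t e, h e) = s(u, v))
    (d0 : Matrix E {x // x ∈ K} ℝ)
    (hd0 : ∀ e v, d0 e v = if v = h e then 1 else if v = t e then -1 else 0)
    (ends : ({x // x ∈ K} ⊕ E) → Finset {x // x ∈ K})
    (hends : ∀ z, ends z = Sum.elim (fun x => ({x} : Finset {x // x ∈ K}))
      (fun e => {t e, h e}) z)
    (L : Matrix ({x // x ∈ K} ⊕ E) ({x // x ∈ K} ⊕ E) ℝ)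
    (hL : ∀ z w, L z w = if (ends z ∩ ends w).Nonempty then 1 else 0) :
    IsUnit L.det ∧
    ∃ U : Matrix ({x // x ∈ K} ⊕ E) ({x // x ∈ K} ⊕ E) ℝ,
      U.IsDiag ∧ (∀ i, U i i = 1 ∨ U i i = -1) ∧
      U * (Matrix.fromBlocks (d0.transpose * d0) 0 0 (d0 * d0.transpose)) * U.transpose =
        L - L⁻¹ :=
  hydrogen_hodge_general K hK1 Γ hΓ E t h hth hbij d0 hd0 ends hends L hL
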